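/- Fix p ∈ (0,1), η > 0, ν ∈ ℝ, δ > 0, τ > 0, and let (A, ζ) with A > 0 be a nontrivial equilibrium (g₁ = g₂ = 0), with Jacobian J there. If A² < 1/(2p) then det J < 0, so J has one positive and one negative real eigenvalue (a saddle). If A² > 1/(2p) then det J > 0, and both eigenvalues of J have negative real part if and only if τ < 1/(2δ); when A² > 1/(2p) and τ = 1/(2δ) the eigenvalues of J are the purely imaginary pair ±i√(det J) (a Hopf bifurcation). -/

import Mathlib

/-!
At a nontrivial equilibrium the two equilibrium equations give
`2δ = (p²η/4)A² - (p³η/4)A⁴`, which turns the Jacobian into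
`!![2δ, -A/2; τ⁻¹(p²η/4)A, -τ⁻¹]`, with trace `2δ - τ⁻¹` and determinant
`τ⁻¹(p²η/8)A²(2pA² - 1)`. The eigenvalues of a real `2 × 2` matrix are the roots of
`μ² - (tr)μ + det`: a negative determinant gives two real roots of opposite signs; for a
positive determinant both roots lie in the open left half-plane exactly when the trace is
negative, and they are `±i√det` when the trace vanishes.
-/

open Matrix

/-- Slow-flow amplitude dynamics for a general network with a single nonlinear node
(small linear damping). -/
noncomputable def g₁ (p ν η A ζ : ℝ) : ℝ :=
  (1 / 2) * ((p * ν - ζ) * A + (p ^ 2 * η / 4) * A ^ 3 - (p ^ 3 * η / 8) * A ^ 5)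

/-- Proposed autonomous damping dynamics for a general network. -/
noncomputable def g₂ (p ν η δ τ A ζ : ℝ) : ℝ :=
  τ⁻¹ * (-ζ + δ + p * ν + (p ^ 2 * η / 8) * A ^ 2)

/-- Jacobian matrix of the planar vector field `(g₁, g₂)` with respect to `(A, ζ)`. -/
noncomputable def Jg (p ν η δ τ A ζ : ℝ) : Matrix (Fin 2) (Fin 2) ℝ :=
  !![deriv (fun a => g₁ p ν η a ζ) A, deriv (fun z => g₁ p ν η A z) ζ;
     deriv (fun a => g₂ p ν η δ τ a ζ) A, deriv (fun z => g₂ p ν η δ τ A z) ζ]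

namespace Matrix

theorem mem_spectrum_fin_two_iff {K : Type*} [Field K] (M : Matrix (Fin 2) (Fin 2) K) (μ : K) :
    μ ∈ spectrum K M ↔ μ * μ - M.trace * μ + M.det = 0 := by
  rw [mem_spectrum_iff_isRoot_charpoly, charpoly_fin_two]
  simp [sq]

theorem trace_map_ofReal {n : Type*} [Fintype n] (M : Matrix n n ℝ) :
    (M.map Complex.ofReal).trace = M.trace :=
  (AddMonoidHom.map_trace Complex.ofRealHom M).symm

theorem det_map_ofReal {n : Type*} [Fintype n] [DecidableEq n] (M : Matrix n n ℝ) :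
    (M.map Complex.ofReal).det = M.det :=
  (RingHom.map_det Complex.ofRealHom M).symm

theorem mem_spectrum_map_ofReal_fin_two_iff (M : Matrix (Fin 2) (Fin 2) ℝ) (μ : ℂ) :
    μ ∈ spectrum ℂ (M.map Complex.ofReal) ↔ μ * μ - M.trace * μ + M.det = 0 := by
  rw [mem_spectrum_fin_two_iff, trace_map_ofReal, det_map_ofReal]

theorem exists_spectrum_fin_two_eq_of_det_neg (M : Matrix (Fin 2) (Fin 2) ℝ) (h : M.det < 0) :
    ∃ μ₁ μ₂ : ℝ, μ₁ < 0 ∧ 0 < μ₂ ∧ spectrum ℝ M = {μ₁, μ₂} := by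
  set s := √(M.trace ^ 2 - 4 * M.det)
  have hs : s * s = M.trace ^ 2 - 4 * M.det := Real.mul_self_sqrt (by nlinarith)
  have hlt : |M.trace| < s := abs_lt_of_sq_lt_sq (by nlinarith) (Real.sqrt_nonneg _)
  refine ⟨(M.trace - s) / 2, (M.trace + s) / 2, by linarith [le_abs_self M.trace],
    by linarith [neg_abs_le M.trace], ?_⟩
  ext μ
  have hroots := quadratic_eq_zero_iff one_ne_zero (b := -M.trace) (c := M.det) (s := s)
    (by rw [discrim, hs]; ring) μ
  rw [mem_spectrum_fin_two_iff, Set.mem_insert_iff, Set.mem_singleton_iff, Or.comm]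
  simpa only [one_mul, mul_one, neg_mul, ← sub_eq_add_neg, neg_neg] using hroots

theorem forall_re_neg_of_mem_spectrum_map_ofReal_iff_trace_neg (M : Matrix (Fin 2) (Fin 2) ℝ)
    (h : 0 < M.det) :
    (∀ μ ∈ spectrum ℂ (M.map Complex.ofReal), μ.re < 0) ↔ M.trace < 0 := by
  simp only [mem_spectrum_map_ofReal_fin_two_iff]
  constructor
  · intro hre
    obtain ⟨s, hs⟩ := IsAlgClosed.exists_eq_mul_self (discrim 1 (-(M.trace : ℂ)) M.det)
    obtain ⟨μ, hμ⟩ := exists_quadratic_eq_zero one_ne_zero ⟨s, hs⟩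
    -- Vieta: the other root is `trace - μ`, and the two roots add up to the trace.
    have hμ_re := hre μ (by linear_combination hμ)
    have hμ'_re := hre (M.trace - μ) (by linear_combination hμ)
    simp only [Complex.sub_re, Complex.ofReal_re] at hμ'_re
    linarith
  · intro htr μ hμ
    have hre := congrArg Complex.re hμ
    have him := congrArg Complex.im hμ
    simp only [Complex.add_re, Complex.sub_re, Complex.mul_re, Complex.add_im, Complex.sub_im,
      Complex.mul_im, Complex.ofReal_re, Complex.ofReal_im, Complex.zero_re,
      Complex.zero_im] at hre him
    rcases eq_or_ne μ.im 0 with hy | hy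
    · rw [hy] at hre
      nlinarith
    · have hfactor : (2 * μ.re - M.trace) * μ.im = 0 := by linear_combination him
      linarith [(mul_eq_zero.mp hfactor).resolve_right hy]

theorem spectrum_map_ofReal_fin_two_of_trace_eq_zero (M : Matrix (Fin 2) (Fin 2) ℝ)
    (htr : M.trace = 0) (hdet : 0 ≤ M.det) :
    spectrum ℂ (M.map Complex.ofReal) =
      {Complex.I * (√M.det : ℂ), -(Complex.I * (√M.det : ℂ))} := by
  have hs : (√M.det : ℂ) ^ 2 = M.det := by exact_mod_cast Real.sq_sqrt hdet
  ext μ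
  have hfactor : μ * μ - (0 : ℝ) * μ + M.det =
      (μ - Complex.I * √M.det) * (μ - -(Complex.I * √M.det)) := by
    push_cast
    linear_combination (√M.det : ℂ) ^ 2 * Complex.I_sq - hs
  rw [mem_spectrum_map_ofReal_fin_two_iff, htr, hfactor, mul_eq_zero, sub_eq_zero, sub_eq_zero,
    Set.mem_insert_iff, Set.mem_singleton_iff]

end Matrix

section Equilibrium

variable {p ν η δ τ A ζ : ℝ}

theorem Jg_eq :
    Jg p ν η δ τ A ζ =
      !![(p * ν - ζ + 3 * (p ^ 2 * η / 4) * A ^ 2 - 5 * (p ^ 3 * η / 8) * A ^ 4) / 2, -(A / 2);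
        τ⁻¹ * (p ^ 2 * η / 4 * A), -τ⁻¹] := by
  ext i j
  fin_cases i <;> fin_cases j <;>
    simp (disch := fun_prop) [Jg, g₁, g₂, -mul_eq_mul_left_iff] <;> ring

theorem amplitude_eq_of_g₁_eq_zero (hA : A ≠ 0) (h₁ : g₁ p ν η A ζ = 0) :
    p * ν - ζ + p ^ 2 * η / 4 * A ^ 2 - p ^ 3 * η / 8 * A ^ 4 = 0 := by
  refine (mul_eq_zero.mp ?_).resolve_right hA
  unfold g₁ at h₁
  linear_combination 2 * h₁

theorem damping_eq_of_g₂_eq_zero (hτ : τ ≠ 0) (h₂ : g₂ p ν η δ τ A ζ = 0) :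
    -ζ + δ + p * ν + p ^ 2 * η / 8 * A ^ 2 = 0 :=
  (mul_eq_zero.mp h₂).resolve_left (inv_ne_zero hτ)

theorem two_mul_δ_eq_of_equilibrium (hτ : τ ≠ 0) (hA : A ≠ 0)
    (h₁ : g₁ p ν η A ζ = 0) (h₂ : g₂ p ν η δ τ A ζ = 0) :
    2 * δ = p ^ 2 * η / 4 * A ^ 2 - p ^ 3 * η / 4 * A ^ 4 := by
  linear_combination 2 * damping_eq_of_g₂_eq_zero hτ h₂ - 2 * amplitude_eq_of_g₁_eq_zero hA h₁

theorem Jg_eq_of_equilibrium (hτ : τ ≠ 0) (hA : A ≠ 0)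
    (h₁ : g₁ p ν η A ζ = 0) (h₂ : g₂ p ν η δ τ A ζ = 0) :
    Jg p ν η δ τ A ζ = !![2 * δ, -(A / 2); τ⁻¹ * (p ^ 2 * η / 4 * A), -τ⁻¹] := by
  rw [Jg_eq]
  congr
  linear_combination amplitude_eq_of_g₁_eq_zero hA h₁ / 2 - two_mul_δ_eq_of_equilibrium hτ hA h₁ h₂

theorem trace_Jg_of_equilibrium (hτ : τ ≠ 0) (hA : A ≠ 0)
    (h₁ : g₁ p ν η A ζ = 0) (h₂ : g₂ p ν η δ τ A ζ = 0) :
    (Jg p ν η δ τ A ζ).trace = 2 * δ - τ⁻¹ := by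
  rw [Jg_eq_of_equilibrium hτ hA h₁ h₂, trace_fin_two_of, sub_eq_add_neg]

theorem det_Jg_of_equilibrium (hτ : τ ≠ 0) (hA : A ≠ 0)
    (h₁ : g₁ p ν η A ζ = 0) (h₂ : g₂ p ν η δ τ A ζ = 0) :
    (Jg p ν η δ τ A ζ).det = τ⁻¹ * (p ^ 2 * η / 8 * A ^ 2) * (2 * p * A ^ 2 - 1) := by
  rw [Jg_eq_of_equilibrium hτ hA h₁ h₂, det_fin_two_of]
  linear_combination -τ⁻¹ * two_mul_δ_eq_of_equilibrium hτ hA h₁ h₂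

end Equilibrium

/-- Stability of the nontrivial equilibria: for `A² < 1/(2p)` a saddle; for
`A² > 1/(2p)` stable iff `τ < 1/(2δ)`, with a Hopf bifurcation at `τ = 1/(2δ)`. -/
theorem stmt_13 (p η ν δ τ A ζ : ℝ) (hp : p ∈ Set.Ioo (0 : ℝ) 1) (hη : 0 < η)
    (hδ : 0 < δ) (hτ : 0 < τ) (hA : 0 < A)
    (h1 : g₁ p ν η A ζ = 0) (h2 : g₂ p ν η δ τ A ζ = 0) :
    (A ^ 2 < 1 / (2 * p) →
      (Jg p ν η δ τ A ζ).det < 0 ∧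
      ∃ μ₁ μ₂ : ℝ, μ₁ < 0 ∧ 0 < μ₂ ∧ spectrum ℝ (Jg p ν η δ τ A ζ) = {μ₁, μ₂}) ∧
    (1 / (2 * p) < A ^ 2 →
      0 < (Jg p ν η δ τ A ζ).det ∧
      ((∀ μ ∈ spectrum ℂ ((Jg p ν η δ τ A ζ).map Complex.ofReal), μ.re < 0) ↔
        τ < 1 / (2 * δ))) ∧
    (1 / (2 * p) < A ^ 2 → τ = 1 / (2 * δ) →
      spectrum ℂ ((Jg p ν η δ τ A ζ).map Complex.ofReal) =
        {Complex.I * (Real.sqrt (Jg p ν η δ τ A ζ).det : ℂ),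
         -(Complex.I * (Real.sqrt (Jg p ν η δ τ A ζ).det : ℂ))}) := by
  have hp₀ : 0 < p := hp.1
  have htr := trace_Jg_of_equilibrium hτ.ne' hA.ne' h1 h2
  have hdet := det_Jg_of_equilibrium hτ.ne' hA.ne' h1 h2
  have hscale : 0 < τ⁻¹ * (p ^ 2 * η / 8 * A ^ 2) := by positivity
  have hdet_pos (hA₂ : 1 / (2 * p) < A ^ 2) : 0 < (Jg p ν η δ τ A ζ).det := by
    rw [div_lt_iff₀ (by positivity)] at hA₂
    rw [hdet]
    exact mul_pos hscale (by linarith)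
  refine ⟨fun hA₂ => ?_, fun hA₂ => ⟨hdet_pos hA₂, ?_⟩, fun hA₂ hτδ => ?_⟩
  · have hdet_neg : (Jg p ν η δ τ A ζ).det < 0 := by
      rw [lt_div_iff₀ (by positivity)] at hA₂
      rw [hdet]
      exact mul_neg_of_pos_of_neg hscale (by linarith)
    exact ⟨hdet_neg, exists_spectrum_fin_two_eq_of_det_neg _ hdet_neg⟩
  · rw [forall_re_neg_of_mem_spectrum_map_ofReal_iff_trace_neg _ (hdet_pos hA₂), htr, sub_neg,
      lt_one_div hτ (by positivity), one_div]
  · refine spectrum_map_ofReal_fin_two_of_trace_eq_zero _ ?_ (hdet_pos hA₂).le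
    rw [htr, hτδ, one_div, inv_inv, sub_self]
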